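/- Suppose $\hat{A}: X \to GL(d,\mathbb{K})$ and $d(\hat{\sigma}^n \hat{y}, \hat{\sigma}^n \hat{z}) \leq e^{-\frac{\chi}{2} n}\, d(\hat{y},\hat{z})$ for $\hat{z} \in W^s_{loc}(\hat{y})$, and the fiber-bunching estimate $\|\hat{A}^n(\hat{x})\| \|\hat{A}^n(\hat{x})^{-1}\| e^{-\frac{\chi}{2} n \alpha} \leq C\theta^n$ holds with $\theta \in (0,1)$ and $\hat{A}$ is $\alpha$-Hölder with constant $K$. Then the sequence $H_n := \hat{A}^n(\hat{z})^{-1}\hat{A}^n(\hat{y})$ satisfies $\|H_{n+1} - H_n\| \leq K' \theta^n d(\hat{y},\hat{z})^{\alpha}$ for some constant $K'$ depending only on $C$, $K$, and $\sup\|\hat{A}^{\pm 1}\|$, and hence $H_n$ converges; the limit $H^s_{\hat{y}\hat{z}} := \lim_{n\to\infty} \hat{A}^n(\hat{z})^{-1}\hat{A}^n(\hat{y})$ satisfies $\|H^s_{\hat{y}\hat{z}} - \mathrm{Id}\| \leq L\, d(\hat{y},\hat{z})^{\alpha}$ with $L = K'/(1-\theta)$. -/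

import Mathlib

/-!
Since `Â^{n+1}(z)⁻¹ Â^{n+1}(y) = Â^n(z)⁻¹ Â(σⁿz)⁻¹ Â(σⁿy) Â^n(y)`, the increments of
`H_n = Â^n(z)⁻¹ Â^n(y)` factor as
`H_{n+1} - H_n = Â^n(z)⁻¹ Â(σⁿz)⁻¹ (Â(σⁿy) - Â(σⁿz)) Â^n(z) H_n`.
Hölder continuity and the contraction of `σⁿy, σⁿz` make the middle factor
`O(e^{-χnα/2} d(y,z)^α)`, and fiber bunching absorbs the conjugation by `Â^n(z)`, so
`‖H_{n+1} - H_n‖ ≤ ε θⁿ ‖H_n‖` with `ε` of order `d(y,z)^α`. Since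
`∏ (1 + ε θⁿ) ≤ exp (ε / (1 - θ))`, the `H_n` are bounded, so their increments are
geometrically small and the sequence converges.
-/

open Filter Topology

/-- Forward cocycle iterates `A^n(x) = A(σ^{n-1}x) ⋯ A(σ x) A(x)` for `n : ℕ`. -/
def cocycleNat {X G : Type*} [Monoid G] (σ : X → X) (A : X → G) : ℕ → X → G
  | 0, _ => 1
  | n + 1, x => A (σ^[n] x) * cocycleNat σ A n x

section GeometricIncrements

variable {E : Type*} [SeminormedAddCommGroup E] {f : ℕ → E}

lemma norm_le_mul_exp_of_norm_sub_le_geometric {ε θ : ℝ} (hε : 0 ≤ ε) (hθ0 : 0 ≤ θ)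
    (hθ1 : θ < 1) (h : ∀ n, ‖f (n + 1) - f n‖ ≤ ε * θ ^ n * ‖f n‖) (n : ℕ) :
    ‖f n‖ ≤ ‖f 0‖ * Real.exp (ε / (1 - θ)) := by
  have hprod : ∀ n, ‖f n‖ ≤ ‖f 0‖ * Real.exp (ε * ∑ i ∈ Finset.range n, θ ^ i) := by
    intro n
    induction n with
    | zero => simp
    | succ n ih =>
      calc ‖f (n + 1)‖ ≤ ‖f n‖ + ‖f (n + 1) - f n‖ := norm_le_norm_add_norm_sub' _ _
        _ ≤ (ε * θ ^ n + 1) * ‖f n‖ := by linarith [h n]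
        _ ≤ Real.exp (ε * θ ^ n) *
              (‖f 0‖ * Real.exp (ε * ∑ i ∈ Finset.range n, θ ^ i)) := by
          gcongr
          exact Real.add_one_le_exp _
        _ = _ := by rw [Finset.sum_range_succ, mul_add, Real.exp_add]; ring
  have hgeom : ∑ i ∈ Finset.range n, θ ^ i ≤ 1 / (1 - θ) := by
    simpa using geom_sum_Ico_le_of_lt_one (m := 0) (n := n) hθ0 hθ1
  calc ‖f n‖ ≤ ‖f 0‖ * Real.exp (ε * ∑ i ∈ Finset.range n, θ ^ i) := hprod n
    _ ≤ ‖f 0‖ * Real.exp (ε / (1 - θ)) := by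
      rw [div_eq_mul_one_div ε]
      gcongr

lemma exists_tendsto_norm_sub_le_of_norm_sub_le_geometric [CompleteSpace E] {a θ : ℝ}
    (hθ1 : θ < 1) (h : ∀ n, ‖f (n + 1) - f n‖ ≤ a * θ ^ n) :
    ∃ L, Tendsto f atTop (𝓝 L) ∧ ‖L - f 0‖ ≤ a / (1 - θ) := by
  have hdist : ∀ n, dist (f n) (f (n + 1)) ≤ a * θ ^ n := fun n => by
    rw [dist_eq_norm']
    exact h n
  obtain ⟨L, hL⟩ := cauchySeq_tendsto_of_complete (cauchySeq_of_le_geometric θ a hθ1 hdist)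
  refine ⟨L, hL, ?_⟩
  rw [← dist_eq_norm']
  exact dist_le_of_le_geometric_of_tendsto₀ θ a hθ1 hdist hL

end GeometricIncrements

section Holonomy

variable {X R : Type*} (σ : X → X)

section Ring

variable [Ring R] (A : X → Rˣ) (y z : X)

def holonomySeq (n : ℕ) : R := ↑((cocycleNat σ A n z)⁻¹ * cocycleNat σ A n y)

@[simp]
lemma holonomySeq_zero : holonomySeq σ A y z 0 = 1 := by
  simp [holonomySeq, cocycleNat]

lemma holonomySeq_succ_sub (n : ℕ) :
    holonomySeq σ A y z (n + 1) - holonomySeq σ A y z n =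
      ↑(cocycleNat σ A n z)⁻¹ * ↑(A (σ^[n] z))⁻¹ * (↑(A (σ^[n] y)) - ↑(A (σ^[n] z))) *
        ↑(cocycleNat σ A n z) * holonomySeq σ A y z n := by
  simp only [holonomySeq, cocycleNat, mul_inv_rev, Units.val_mul, mul_assoc,
    Units.mul_inv_cancel_left, sub_mul, mul_sub, Units.inv_mul_cancel_left]

end Ring

variable [NormedRing R] (A : X → Rˣ) (y z : X)

lemma norm_holonomySeq_succ_sub_le (n : ℕ) :
    ‖holonomySeq σ A y z (n + 1) - holonomySeq σ A y z n‖ ≤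
      ‖(↑(cocycleNat σ A n z) : R)‖ * ‖(↑(cocycleNat σ A n z)⁻¹ : R)‖ * ‖(↑(A (σ^[n] z))⁻¹ : R)‖ *
        ‖(A (σ^[n] y) : R) - A (σ^[n] z)‖ * ‖holonomySeq σ A y z n‖ := by
  rw [holonomySeq_succ_sub]
  calc _ ≤ ‖(↑(cocycleNat σ A n z)⁻¹ : R)‖ * ‖(↑(A (σ^[n] z))⁻¹ : R)‖ *
        ‖(A (σ^[n] y) : R) - A (σ^[n] z)‖ * ‖(↑(cocycleNat σ A n z) : R)‖ *
          ‖holonomySeq σ A y z n‖ := by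
        refine (norm_mul_le _ _).trans ?_
        gcongr
        refine (norm_mul_le _ _).trans ?_
        gcongr
        exact norm_mul₃_le
    _ = _ := by ring

lemma norm_holonomySeq_succ_sub_le_geometric [PseudoMetricSpace X] {χ α θ C K M : ℝ}
    (hα : 0 ≤ α) (hK : 0 ≤ K) (hinv : ∀ x, ‖(↑(A x)⁻¹ : R)‖ ≤ M)
    (hHolder : ∀ a b, ‖(A a : R) - A b‖ ≤ K * dist a b ^ α)
    (hfb : ∀ n : ℕ, ‖(↑(cocycleNat σ A n z) : R)‖ * ‖(↑(cocycleNat σ A n z)⁻¹ : R)‖ *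
      Real.exp (-(χ / 2) * n * α) ≤ C * θ ^ n)
    (hcontr : ∀ n : ℕ, dist (σ^[n] y) (σ^[n] z) ≤ Real.exp (-(χ / 2) * n) * dist y z)
    (n : ℕ) :
    ‖holonomySeq σ A y z (n + 1) - holonomySeq σ A y z n‖ ≤
      C * M * K * dist y z ^ α * θ ^ n * ‖holonomySeq σ A y z n‖ := by
  have hM : 0 ≤ M := (norm_nonneg _).trans (hinv y)
  have hdist : dist (σ^[n] y) (σ^[n] z) ^ α ≤ Real.exp (-(χ / 2) * n * α) * dist y z ^ α :=
    calc _ ≤ (Real.exp (-(χ / 2) * n) * dist y z) ^ α :=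
          Real.rpow_le_rpow dist_nonneg (hcontr n) hα
      _ = _ := by rw [Real.mul_rpow (Real.exp_pos _).le dist_nonneg, ← Real.exp_mul]
  calc _ ≤ ‖(↑(cocycleNat σ A n z) : R)‖ * ‖(↑(cocycleNat σ A n z)⁻¹ : R)‖ * M *
        (K * (Real.exp (-(χ / 2) * n * α) * dist y z ^ α)) * ‖holonomySeq σ A y z n‖ := by
        refine (norm_holonomySeq_succ_sub_le σ A y z n).trans ?_
        gcongr
        · exact hinv _
        · exact (hHolder _ _).trans (by gcongr)
    _ = ‖(↑(cocycleNat σ A n z) : R)‖ * ‖(↑(cocycleNat σ A n z)⁻¹ : R)‖ *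
          Real.exp (-(χ / 2) * n * α) * (M * K * dist y z ^ α * ‖holonomySeq σ A y z n‖) := by
        ring
    _ ≤ C * θ ^ n * (M * K * dist y z ^ α * ‖holonomySeq σ A y z n‖) := by
        gcongr ?_ * _
        exact hfb n
    _ = _ := by ring

end Holonomy

theorem stable_holonomy_exists_general {X : Type*} [MetricSpace X] {d : ℕ}
    (σ : X → X)
    (A : X → (EuclideanSpace ℂ (Fin d) →L[ℂ] EuclideanSpace ℂ (Fin d))ˣ)
    (χ α θ C K Msup : ℝ) (hα0 : 0 < α)
    (hθ0 : 0 < θ) (hθ1 : θ < 1) (hC : 0 < C) (hK : 0 < K) (hM : 0 < Msup)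
    (hbound : ∀ x : X, ‖(A x).val‖ ≤ Msup ∧ ‖((A x)⁻¹).val‖ ≤ Msup)
    (hHolder : ∀ a b : X, ‖(A a).val - (A b).val‖ ≤ K * dist a b ^ α)
    (hfb : ∀ (x : X) (n : ℕ),
      ‖(cocycleNat σ A n x).val‖ * ‖((cocycleNat σ A n x)⁻¹).val‖ *
        Real.exp (-(χ / 2) * n * α) ≤ C * θ ^ n)
    (y z : X)
    (hcontr : ∀ n : ℕ, dist (σ^[n] y) (σ^[n] z) ≤ Real.exp (-(χ / 2) * n) * dist y z) :
    ∃ K' : ℝ, 0 < K' ∧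
      (∀ n : ℕ,
        ‖(((cocycleNat σ A (n + 1) z)⁻¹ * cocycleNat σ A (n + 1) y).val
          - ((cocycleNat σ A n z)⁻¹ * cocycleNat σ A n y).val)‖
          ≤ K' * θ ^ n * dist y z ^ α) ∧
      ∃ Hs : EuclideanSpace ℂ (Fin d) →L[ℂ] EuclideanSpace ℂ (Fin d),
        Tendsto (fun n : ℕ => ((cocycleNat σ A n z)⁻¹ * cocycleNat σ A n y).val)
          atTop (nhds Hs) ∧
        ‖Hs - 1‖ ≤ K' / (1 - θ) * dist y z ^ α := by
  set ε := C * Msup * K * dist y z ^ α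
  have hstep : ∀ n, ‖holonomySeq σ A y z (n + 1) - holonomySeq σ A y z n‖ ≤
      ε * θ ^ n * ‖holonomySeq σ A y z n‖ :=
    norm_holonomySeq_succ_sub_le_geometric σ A y z hα0.le hK.le (fun x => (hbound x).2)
      hHolder (fun n => hfb z n) hcontr
  set B := Real.exp (ε / (1 - θ))
  have hbdd (n : ℕ) : ‖holonomySeq σ A y z n‖ ≤ B := by
    refine (norm_le_mul_exp_of_norm_sub_le_geometric (by positivity) hθ0.le hθ1 hstep n).trans ?_
    rw [holonomySeq_zero]
    exact mul_le_of_le_one_left (Real.exp_pos _).le ContinuousLinearMap.norm_id_le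
  have hincr (n : ℕ) : ‖holonomySeq σ A y z (n + 1) - holonomySeq σ A y z n‖ ≤
      C * Msup * K * B * θ ^ n * dist y z ^ α :=
    calc _ ≤ ε * θ ^ n * B := (hstep n).trans (by gcongr; exact hbdd n)
      _ = _ := by ring
  obtain ⟨Hs, hlim, hHs⟩ := exists_tendsto_norm_sub_le_of_norm_sub_le_geometric hθ1
    (a := C * Msup * K * B * dist y z ^ α) fun n => by simpa only [mul_right_comm] using hincr n
  refine ⟨C * Msup * K * B, by positivity, hincr, Hs, hlim, ?_⟩
  simpa only [holonomySeq_zero, mul_div_right_comm] using hHs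

/-- Construction of stable holonomies for fiber-bunched Hölder cocycles: for a pair
`y, z` exponentially contracted under `σ`, the sequence `H_n = Â^n(z)^{-1} Â^n(y)` is
Cauchy with `‖H_{n+1} - H_n‖ ≤ K' θ^n d(y,z)^α` for some constant `K'` (depending only
on the fiber-bunching constant, the Hölder constant and the uniform bounds on `Â^{±1}`),
hence converges, and the limit `H^s_{yz}` satisfies
`‖H^s_{yz} - Id‖ ≤ K'/(1-θ) · d(y,z)^α`. -/
theorem stable_holonomy_exists {X : Type*} [MetricSpace X] {d : ℕ}
    (σ : X → X)
    (A : X → (EuclideanSpace ℂ (Fin d) →L[ℂ] EuclideanSpace ℂ (Fin d))ˣ)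
    (χ α θ C K Msup : ℝ) (hχ : 0 < χ) (hα0 : 0 < α) (hα1 : α ≤ 1)
    (hθ0 : 0 < θ) (hθ1 : θ < 1) (hC : 0 < C) (hK : 0 < K) (hM : 0 < Msup)
    (hbound : ∀ x : X, ‖(A x).val‖ ≤ Msup ∧ ‖((A x)⁻¹).val‖ ≤ Msup)
    (hHolder : ∀ a b : X, ‖(A a).val - (A b).val‖ ≤ K * dist a b ^ α)
    (hfb : ∀ (x : X) (n : ℕ),
      ‖(cocycleNat σ A n x).val‖ * ‖((cocycleNat σ A n x)⁻¹).val‖ *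
        Real.exp (-(χ / 2) * n * α) ≤ C * θ ^ n)
    (y z : X)
    (hcontr : ∀ n : ℕ, dist (σ^[n] y) (σ^[n] z) ≤ Real.exp (-(χ / 2) * n) * dist y z) :
    ∃ K' : ℝ, 0 < K' ∧
      (∀ n : ℕ,
        ‖(((cocycleNat σ A (n + 1) z)⁻¹ * cocycleNat σ A (n + 1) y).val
          - ((cocycleNat σ A n z)⁻¹ * cocycleNat σ A n y).val)‖
          ≤ K' * θ ^ n * dist y z ^ α) ∧
      ∃ Hs : EuclideanSpace ℂ (Fin d) →L[ℂ] EuclideanSpace ℂ (Fin d),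
        Tendsto (fun n : ℕ => ((cocycleNat σ A n z)⁻¹ * cocycleNat σ A n y).val)
          atTop (nhds Hs) ∧
        ‖Hs - 1‖ ≤ K' / (1 - θ) * dist y z ^ α :=
  stable_holonomy_exists_general σ A χ α θ C K Msup hα0 hθ0 hθ1 hC hK hM hbound hHolder hfb y z
    hcontr
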